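/- arXiv:2301.06992 — 5 statements merged into one kernel-verified Lean document; each statement's English description precedes it below -/
import Mathlib

section
/- Let H be a real Hilbert space, b ∈ H, and M ≥ 0. Let m be a Borel measure on H with m({0}) = 0 and ∫_H ‖ξ‖² dm(ξ) < ∞. Let u, v ∈ H satisfy ‖u‖ ≤ M and ‖v‖ ≤ M, and suppose that for m-almost every ξ one has ⟨ξ, u⟩ ≥ 0 and ⟨ξ, v⟩ ≥ 0. Define F(w) := ⟨b, w⟩ − ∫_H (e^{−⟨ξ,w⟩} − 1 + ⟨χ(ξ), w⟩) dm(ξ) for w ∈ {u, v}. Then both integrals are absolutely convergent and |F(u) − F(v)| ≤ (‖b‖ + (M + 1)·∫_H ‖ξ‖² dm(ξ))·‖u − v‖. -/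
/-! For `‖ξ‖ ≤ 1` the integrand is `ψ ⟪ξ, w⟫ - 1` with `ψ t = exp (-t) + t`, whose derivative
`1 - exp (-t)` lies in `[0, t]`, so `ψ` is `M‖ξ‖`-Lipschitz on `[0, M‖ξ‖]`; for `‖ξ‖ > 1` it is
`exp (-⟪ξ, w⟫) - 1`, and `exp (-t)` is `1`-Lipschitz on `[0, ∞)`. The cone condition
`⟪ξ, w⟫ ≥ 0` keeps both arguments in these ranges, so the integrands for `u` and `v` differ by at
most `(M + 1)‖u - v‖‖ξ‖²`. Taking `v = 0` also gives integrability. -/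

open MeasureTheory Set
open scoped RealInnerProductSpace

namespace Real

lemma abs_exp_neg_sub_exp_neg_le {s t : ℝ} (hs : 0 ≤ s) (ht : 0 ≤ t) :
    |exp (-s) - exp (-t)| ≤ |s - t| := by
  have hderiv : ∀ x ∈ Ici (0 : ℝ),
      HasDerivWithinAt (fun x => exp (-x)) (exp (-x) * -1) (Ici 0) x :=
    fun x _ => (hasDerivAt_neg x).exp.hasDerivWithinAt
  have hbound : ∀ x ∈ Ici (0 : ℝ), ‖exp (-x) * -1‖ ≤ 1 := fun x hx => by
    rw [mul_neg_one, norm_neg, norm_of_nonneg (exp_pos _).le]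
    exact exp_le_one_iff.mpr (neg_nonpos.mpr hx)
  simpa using (convex_Ici 0).norm_image_sub_le_of_norm_hasDerivWithin_le hderiv hbound
    (mem_Ici.mpr ht) (mem_Ici.mpr hs)

lemma abs_exp_neg_add_sub_exp_neg_add_le {K s t : ℝ} (hs : s ∈ Icc 0 K) (ht : t ∈ Icc 0 K) :
    |(exp (-s) + s) - (exp (-t) + t)| ≤ K * |s - t| := by
  have hderiv : ∀ x ∈ Icc 0 K,
      HasDerivWithinAt (fun x => exp (-x) + x) (exp (-x) * -1 + 1) (Icc 0 K) x :=
    fun x _ => ((hasDerivAt_neg x).exp.add (hasDerivAt_id x)).hasDerivWithinAt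
  have hbound : ∀ x ∈ Icc 0 K, ‖exp (-x) * -1 + 1‖ ≤ K := fun x hx => by
    have hlower := add_one_le_exp (-x)
    have hupper : exp (-x) ≤ 1 := exp_le_one_iff.mpr (neg_nonpos.mpr hx.1)
    rw [norm_of_nonneg (by linarith)]
    linarith [hx.2]
  simpa using (convex_Icc 0 K).norm_image_sub_le_of_norm_hasDerivWithin_le hderiv hbound ht hs

end Real

section JumpIntegrand

variable {H : Type*} [NormedAddCommGroup H]

noncomputable def truncation (ξ : H) : H := if ‖ξ‖ ≤ 1 then ξ else 0

@[fun_prop]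
lemma measurable_truncation [MeasurableSpace H] [BorelSpace H] :
    Measurable (truncation : H → H) :=
  Measurable.ite (measurableSet_le measurable_norm measurable_const) measurable_id measurable_const

variable [InnerProductSpace ℝ H]

noncomputable def jumpIntegrand (w ξ : H) : ℝ := Real.exp (-⟪ξ, w⟫) - 1 + ⟪truncation ξ, w⟫

lemma measurable_jumpIntegrand [MeasurableSpace H] [BorelSpace H] (w : H) :
    Measurable (jumpIntegrand w) := by
  unfold jumpIntegrand
  fun_prop

lemma jumpIntegrand_zero_left (ξ : H) : jumpIntegrand 0 ξ = 0 := by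
  simp [jumpIntegrand]

lemma jumpIntegrand_of_norm_le {ξ : H} (w : H) (hξ : ‖ξ‖ ≤ 1) :
    jumpIntegrand w ξ = (Real.exp (-⟪ξ, w⟫) + ⟪ξ, w⟫) - 1 := by
  rw [jumpIntegrand, truncation, if_pos hξ]
  ring

lemma jumpIntegrand_of_one_lt_norm {ξ : H} (w : H) (hξ : 1 < ‖ξ‖) :
    jumpIntegrand w ξ = Real.exp (-⟪ξ, w⟫) - 1 := by
  rw [jumpIntegrand, truncation, if_neg hξ.not_ge, inner_zero_left, add_zero]

lemma abs_inner_sub_inner_le (ξ u v : H) : |⟪ξ, u⟫ - ⟪ξ, v⟫| ≤ ‖ξ‖ * ‖u - v‖ := by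
  rw [← inner_sub_right]
  exact abs_real_inner_le_norm ξ (u - v)

lemma abs_jumpIntegrand_sub_le {M : ℝ} {u v ξ : H} (hu : ‖u‖ ≤ M) (hv : ‖v‖ ≤ M)
    (hξu : 0 ≤ ⟪ξ, u⟫) (hξv : 0 ≤ ⟪ξ, v⟫) :
    |jumpIntegrand u ξ - jumpIntegrand v ξ| ≤ (M + 1) * ‖u - v‖ * ‖ξ‖ ^ 2 := by
  have hM : 0 ≤ M := (norm_nonneg u).trans hu
  have hdiff := abs_inner_sub_inner_le ξ u v
  have hnorms : 0 ≤ ‖ξ‖ * ‖u - v‖ := by positivity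
  rcases le_or_gt ‖ξ‖ 1 with hsmall | hlarge
  · have hmem : ∀ w : H, ‖w‖ ≤ M → 0 ≤ ⟪ξ, w⟫ → ⟪ξ, w⟫ ∈ Icc 0 (M * ‖ξ‖) := fun w hw hξw =>
      ⟨hξw, (real_inner_le_norm ξ w).trans (by rw [mul_comm]; gcongr)⟩
    rw [jumpIntegrand_of_norm_le u hsmall, jumpIntegrand_of_norm_le v hsmall,
      sub_sub_sub_cancel_right]
    calc _ ≤ M * ‖ξ‖ * |⟪ξ, u⟫ - ⟪ξ, v⟫| :=
          Real.abs_exp_neg_add_sub_exp_neg_add_le (hmem u hu hξu) (hmem v hv hξv)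
      _ ≤ M * ‖ξ‖ * (‖ξ‖ * ‖u - v‖) := by gcongr
      _ ≤ (M + 1) * ‖u - v‖ * ‖ξ‖ ^ 2 := by nlinarith [mul_nonneg (norm_nonneg ξ) hnorms]
  · rw [jumpIntegrand_of_one_lt_norm u hlarge, jumpIntegrand_of_one_lt_norm v hlarge,
      sub_sub_sub_cancel_right]
    calc _ ≤ |⟪ξ, u⟫ - ⟪ξ, v⟫| := Real.abs_exp_neg_sub_exp_neg_le hξu hξv
      _ ≤ ‖ξ‖ * ‖u - v‖ := hdiff
      _ ≤ (M + 1) * ‖u - v‖ * ‖ξ‖ ^ 2 := by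
        nlinarith [mul_nonneg (mul_nonneg hM (norm_nonneg (u - v))) (sq_nonneg ‖ξ‖)]

variable [MeasurableSpace H] [BorelSpace H] {m : Measure H}

lemma integrable_jumpIntegrand (hm2 : Integrable (fun ξ : H => ‖ξ‖ ^ 2) m) {w : H}
    (hpw : ∀ᵐ ξ ∂m, 0 ≤ ⟪ξ, w⟫) : Integrable (jumpIntegrand w) m := by
  refine (hm2.const_mul ((‖w‖ + 1) * ‖w‖)).mono'
    (measurable_jumpIntegrand w).aestronglyMeasurable ?_
  filter_upwards [hpw] with ξ hξw
  simpa [jumpIntegrand_zero_left] using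
    abs_jumpIntegrand_sub_le le_rfl (norm_zero.trans_le (norm_nonneg w)) hξw (inner_zero_right ξ).ge

lemma abs_integral_jumpIntegrand_sub_le (hm2 : Integrable (fun ξ : H => ‖ξ‖ ^ 2) m) {M : ℝ}
    {u v : H} (hu : ‖u‖ ≤ M) (hv : ‖v‖ ≤ M)
    (hpu : ∀ᵐ ξ ∂m, 0 ≤ ⟪ξ, u⟫) (hpv : ∀ᵐ ξ ∂m, 0 ≤ ⟪ξ, v⟫) :
    |∫ ξ, jumpIntegrand u ξ ∂m - ∫ ξ, jumpIntegrand v ξ ∂m|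
      ≤ (M + 1) * ‖u - v‖ * ∫ ξ, ‖ξ‖ ^ 2 ∂m := by
  rw [← integral_sub (integrable_jumpIntegrand hm2 hpu) (integrable_jumpIntegrand hm2 hpv),
    ← integral_const_mul, ← Real.norm_eq_abs]
  refine norm_integral_le_of_norm_le (hm2.const_mul _) ?_
  filter_upwards [hpu, hpv] with ξ hξu hξv
  exact abs_jumpIntegrand_sub_le hu hv hξu hξv

end JumpIntegrand

theorem stmt_0_general {H : Type*} [NormedAddCommGroup H] [InnerProductSpace ℝ H]
    [MeasurableSpace H] [BorelSpace H]
    (b : H) (M : ℝ)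
    (m : Measure H)
    (hm2 : Integrable (fun ξ : H => ‖ξ‖ ^ 2) m)
    (u v : H) (hu : ‖u‖ ≤ M) (hv : ‖v‖ ≤ M)
    (hpu : ∀ᵐ ξ ∂m, 0 ≤ ⟪ξ, u⟫) (hpv : ∀ᵐ ξ ∂m, 0 ≤ ⟪ξ, v⟫) :
    Integrable (fun ξ : H =>
        Real.exp (-⟪ξ, u⟫) - 1 + ⟪(if ‖ξ‖ ≤ 1 then ξ else 0), u⟫) m ∧
    Integrable (fun ξ : H =>
        Real.exp (-⟪ξ, v⟫) - 1 + ⟪(if ‖ξ‖ ≤ 1 then ξ else 0), v⟫) m ∧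
    |(⟪b, u⟫ - ∫ ξ, (Real.exp (-⟪ξ, u⟫) - 1 + ⟪(if ‖ξ‖ ≤ 1 then ξ else 0), u⟫) ∂m)
      - (⟪b, v⟫ - ∫ ξ, (Real.exp (-⟪ξ, v⟫) - 1 + ⟪(if ‖ξ‖ ≤ 1 then ξ else 0), v⟫) ∂m)|
      ≤ (‖b‖ + (M + 1) * ∫ ξ, ‖ξ‖ ^ 2 ∂m) * ‖u - v‖ := by
  refine ⟨integrable_jumpIntegrand hm2 hpu, integrable_jumpIntegrand hm2 hpv, ?_⟩
  change |(⟪b, u⟫ - ∫ ξ, jumpIntegrand u ξ ∂m) - (⟪b, v⟫ - ∫ ξ, jumpIntegrand v ξ ∂m)| ≤ _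
  have hdrift : |⟪b, u⟫ - ⟪b, v⟫| ≤ ‖b‖ * ‖u - v‖ := abs_inner_sub_inner_le b u v
  have hjump := abs_integral_jumpIntegrand_sub_le hm2 hu hv hpu hpv
  calc _ ≤ |⟪b, u⟫ - ⟪b, v⟫| + |∫ ξ, jumpIntegrand u ξ ∂m - ∫ ξ, jumpIntegrand v ξ ∂m| := by
        rw [sub_sub_sub_comm]; exact abs_sub _ _
    _ ≤ (‖b‖ + (M + 1) * ∫ ξ, ‖ξ‖ ^ 2 ∂m) * ‖u - v‖ := by linarith

/-- Lipschitz estimate for the function `F` of the generalized Riccati equations: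
with the truncation function `χ(ξ) = ξ · 1_{‖ξ‖ ≤ 1}(ξ)` and
`F(w) = ⟪b, w⟫ − ∫ (e^{−⟪ξ,w⟫} − 1 + ⟪χ(ξ), w⟫) dm(ξ)`, both integrals converge
absolutely and `|F(u) − F(v)| ≤ (‖b‖ + (M + 1)·∫‖ξ‖² dm)·‖u − v‖`. -/
theorem stmt_0 {H : Type*} [NormedAddCommGroup H] [InnerProductSpace ℝ H] [CompleteSpace H]
    [MeasurableSpace H] [BorelSpace H]
    (b : H) (M : ℝ) (hM : 0 ≤ M)
    (m : Measure H) (hm0 : m {0} = 0)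
    (hm2 : Integrable (fun ξ : H => ‖ξ‖ ^ 2) m)
    (u v : H) (hu : ‖u‖ ≤ M) (hv : ‖v‖ ≤ M)
    (hpu : ∀ᵐ ξ ∂m, 0 ≤ ⟪ξ, u⟫) (hpv : ∀ᵐ ξ ∂m, 0 ≤ ⟪ξ, v⟫) :
    Integrable (fun ξ : H =>
        Real.exp (-⟪ξ, u⟫) - 1 + ⟪(if ‖ξ‖ ≤ 1 then ξ else 0), u⟫) m ∧
    Integrable (fun ξ : H =>
        Real.exp (-⟪ξ, v⟫) - 1 + ⟪(if ‖ξ‖ ≤ 1 then ξ else 0), v⟫) m ∧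
    |(⟪b, u⟫ - ∫ ξ, (Real.exp (-⟪ξ, u⟫) - 1 + ⟪(if ‖ξ‖ ≤ 1 then ξ else 0), u⟫) ∂m)
      - (⟪b, v⟫ - ∫ ξ, (Real.exp (-⟪ξ, v⟫) - 1 + ⟪(if ‖ξ‖ ≤ 1 then ξ else 0), v⟫) ∂m)|
      ≤ (‖b‖ + (M + 1) * ∫ ξ, ‖ξ‖ ^ 2 ∂m) * ‖u - v‖ :=
  stmt_0_general b M m hm2 u v hu hv hpu hpv
end

section
/- Let X be a real Banach space, T > 0, R : X → X a map, P : X → X a continuous linear map with operator norm ‖P‖ ≤ 1, and L ≥ 0. Let ψ, ψ_P : [0,T] → X be continuously differentiable functions such that ψ'(t) = R(ψ(t)) and ψ_P'(t) = P(R(ψ_P(t))) for all t ∈ [0,T], with ψ_P(0) = P(ψ(0)), and assume ‖R(ψ(t)) − R(ψ_P(t))‖ ≤ L·‖ψ(t) − ψ_P(t)‖ for all t ∈ [0,T]. Then for every t ∈ [0,T]: ‖ψ(t) − ψ_P(t)‖ ≤ e^{Lt} · sup_{s∈[0,t]} ‖ψ(s) − P(ψ(s))‖. Moreover, if F : X →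 ℝ and L_F ≥ 0 satisfy |F(ψ(t)) − F(ψ_P(t))| ≤ L_F·‖ψ(t) − ψ_P(t)‖ for all t ∈ [0,T], then |∫₀ᵗ F(ψ(s)) ds − ∫₀ᵗ F(ψ_P(s)) ds| ≤ L_F · t · e^{Lt} · sup_{s∈[0,t]} ‖ψ(s) − P(ψ(s))‖ for every t ∈ [0,T]. -/
open MeasureTheory intervalIntegral

/-- Abstract Galerkin approximation error bound: if `ψ` solves `ψ' = R(ψ)` and `ψ_P` solves
the projected equation `ψ_P' = P(R(ψ_P))` with `ψ_P(0) = P(ψ(0))`, `‖P‖ ≤ 1` and the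
difference of the right-hand sides is Lipschitz-controlled along the trajectories, then the
error is controlled by `e^{Lt}` times the projection error along the exact trajectory, and
correspondingly for the integrated functional `F`. -/
theorem stmt_4 {X : Type*} [NormedAddCommGroup X] [NormedSpace ℝ X] [CompleteSpace X]
    (T : ℝ) (hT : 0 < T) (R : X → X) (P : X →L[ℝ] X) (hPnorm : ‖P‖ ≤ 1)
    (L : ℝ) (hL : 0 ≤ L)
    (ψ ψP : ℝ → X)
    (hψ : ∀ t ∈ Set.Icc (0 : ℝ) T, HasDerivAt ψ (R (ψ t)) t)
    (hψP : ∀ t ∈ Set.Icc (0 : ℝ) T, HasDerivAt ψP (P (R (ψP t))) t)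
    (h0 : ψP 0 = P (ψ 0))
    (hLip : ∀ t ∈ Set.Icc (0 : ℝ) T, ‖R (ψ t) - R (ψP t)‖ ≤ L * ‖ψ t - ψP t‖)
    (F : X → ℝ) (LF : ℝ) (hLF : 0 ≤ LF)
    (hFLip : ∀ t ∈ Set.Icc (0 : ℝ) T, |F (ψ t) - F (ψP t)| ≤ LF * ‖ψ t - ψP t‖)
    (hFint : ∀ t ∈ Set.Icc (0 : ℝ) T,
      IntervalIntegrable (fun s => F (ψ s)) volume 0 t ∧
      IntervalIntegrable (fun s => F (ψP s)) volume 0 t) :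
    (∀ t ∈ Set.Icc (0 : ℝ) T,
      ‖ψ t - ψP t‖ ≤ Real.exp (L * t) * ⨆ s : Set.Icc (0 : ℝ) t, ‖ψ s - P (ψ s)‖) ∧
    (∀ t ∈ Set.Icc (0 : ℝ) T,
      |(∫ s in (0 : ℝ)..t, F (ψ s)) - ∫ s in (0 : ℝ)..t, F (ψP s)|
        ≤ LF * t * Real.exp (L * t) * ⨆ s : Set.Icc (0 : ℝ) t, ‖ψ s - P (ψ s)‖) := by
  have hψc : ContinuousOn ψ (Set.Icc 0 T) :=
    fun s hs => ((hψ s hs).continuousAt).continuousWithinAt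
  have hψPc : ContinuousOn ψP (Set.Icc 0 T) :=
    fun s hs => ((hψP s hs).continuousAt).continuousWithinAt
  set g : ℝ → X := fun s => P (ψ s) - ψP s with hgdef
  have hg' : ∀ s ∈ Set.Icc (0:ℝ) T,
      HasDerivAt g (P (R (ψ s)) - P (R (ψP s))) s := fun s hs =>
    (P.hasFDerivAt.comp_hasDerivAt s (hψ s hs)).sub (hψP s hs)
  set M : ℝ → ℝ := fun t => ⨆ s : Set.Icc (0:ℝ) t, ‖ψ s - P (ψ s)‖ with hMdef
  -- key estimate
  have key : ∀ t ∈ Set.Icc (0:ℝ) T, ∀ s ∈ Set.Icc (0:ℝ) t,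
      ‖ψ s - ψP s‖ ≤ Real.exp (L * s) * M t := by
    intro t ht s hs
    have hsub : Set.Icc (0:ℝ) t ⊆ Set.Icc 0 T :=
      Set.Icc_subset_Icc le_rfl ht.2
    have hne : (Set.Icc (0:ℝ) t).Nonempty := ⟨0, le_rfl, ht.1⟩
    have hcont : ContinuousOn (fun x => ‖ψ x - P (ψ x)‖) (Set.Icc 0 t) :=
      ((hψc.mono hsub).sub (P.continuous.comp_continuousOn (hψc.mono hsub))).norm
    have hbdd : BddAbove (Set.range fun s : Set.Icc (0:ℝ) t => ‖ψ s - P (ψ s)‖) := by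
      rw [show (fun s : Set.Icc (0:ℝ) t => ‖ψ s - P (ψ s)‖)
          = (fun x => ‖ψ x - P (ψ x)‖) ∘ Subtype.val from rfl,
        Set.range_comp, Subtype.range_coe]
      exact isCompact_Icc.bddAbove_image hcont
    have hMle : ∀ u ∈ Set.Icc (0:ℝ) t, ‖ψ u - P (ψ u)‖ ≤ M t := fun u hu =>
      le_ciSup hbdd (⟨u, hu⟩ : Set.Icc (0:ℝ) t)
    have hM0 : 0 ≤ M t := (norm_nonneg _).trans (hMle 0 ⟨le_rfl, ht.1⟩)
    have hgb : ∀ u ∈ Set.Icc (0:ℝ) t, ‖g u‖ ≤ gronwallBound 0 L (L * M t) (u - 0) := by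
      apply norm_le_gronwallBound_of_norm_deriv_right_le
        (f' := fun u => P (R (ψ u)) - P (R (ψP u)))
      · exact fun u hu => ((hg' u (hsub hu)).continuousAt).continuousWithinAt
      · exact fun u hu => (hg' u (hsub (Set.Ico_subset_Icc_self hu))).hasDerivWithinAt
      · simp [hgdef, h0]
      · intro u hu
        have huT : u ∈ Set.Icc (0:ℝ) T := hsub (Set.Ico_subset_Icc_self hu)
        have h1 : ‖P (R (ψ u)) - P (R (ψP u))‖ ≤ L * ‖ψ u - ψP u‖ := by
          rw [← map_sub]
          calc ‖P (R (ψ u) - R (ψP u))‖ ≤ ‖P‖ * ‖R (ψ u) - R (ψP u)‖ := P.le_opNorm _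
            _ ≤ 1 * (L * ‖ψ u - ψP u‖) :=
              mul_le_mul hPnorm (hLip u huT) (norm_nonneg _) zero_le_one
            _ = L * ‖ψ u - ψP u‖ := one_mul _
        have h2 : ‖ψ u - ψP u‖ ≤ ‖ψ u - P (ψ u)‖ + ‖g u‖ := by
          have : ψ u - ψP u = (ψ u - P (ψ u)) + g u := by simp [hgdef]
          rw [this]; exact norm_add_le _ _
        have h3 := hMle u (Set.Ico_subset_Icc_self hu)
        calc ‖P (R (ψ u)) - P (R (ψP u))‖ ≤ L * ‖ψ u - ψP u‖ := h1
          _ ≤ L * (‖g u‖ + M t) := by nlinarith [norm_nonneg (g u)]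
          _ = L * ‖g u‖ + L * M t := by ring
    have hgs := hgb s hs
    have hgw : gronwallBound 0 L (L * M t) (s - 0) ≤ (Real.exp (L * s) - 1) * M t := by
      rcases eq_or_ne L 0 with h | h
      · simp [h, gronwallBound_K0]
      · rw [gronwallBound_of_K_ne_0 h]
        have : L * M t / L = M t := by field_simp
        rw [this]
        simp [sub_zero]
        ring_nf
        nlinarith [Real.exp_pos (L * s)]
    have h2 : ‖ψ s - ψP s‖ ≤ ‖ψ s - P (ψ s)‖ + ‖g s‖ := by
      have : ψ s - ψP s = (ψ s - P (ψ s)) + g s := by simp [hgdef]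
      rw [this]; exact norm_add_le _ _
    have h3 := hMle s hs
    have := hgs.trans hgw
    nlinarith [Real.exp_pos (L * s), this, h2, h3]
  constructor
  · intro t ht
    have := key t ht t ⟨ht.1, le_rfl⟩
    exact this
  · intro t ht
    have hMle0 : (0:ℝ) ≤ M t := by
      have := key t ht 0 ⟨le_rfl, ht.1⟩
      nlinarith [norm_nonneg (ψ 0 - ψP 0), Real.exp_pos (L * 0), Real.exp_zero]
    rw [← intervalIntegral.integral_sub (hFint t ht).1 (hFint t ht).2]
    have hb : ∀ s ∈ Set.uIoc (0:ℝ) t, ‖F (ψ s) - F (ψP s)‖ ≤ LF * (Real.exp (L * t) * M t) := by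
      intro s hs
      rw [Set.uIoc_of_le ht.1] at hs
      have hs' : s ∈ Set.Icc (0:ℝ) t := ⟨le_of_lt hs.1, hs.2⟩
      have hsT : s ∈ Set.Icc (0:ℝ) T := ⟨hs'.1, hs'.2.trans ht.2⟩
      have h1 := hFLip s hsT
      have h2 := key t ht s hs'
      have h3 : Real.exp (L * s) ≤ Real.exp (L * t) :=
        Real.exp_le_exp.mpr (mul_le_mul_of_nonneg_left hs'.2 hL)
      rw [Real.norm_eq_abs]
      calc |F (ψ s) - F (ψP s)| ≤ LF * ‖ψ s - ψP s‖ := h1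
        _ ≤ LF * (Real.exp (L * t) * M t) := mul_le_mul_of_nonneg_left (h2.trans (mul_le_mul_of_nonneg_right h3 hMle0)) hLF
    have := intervalIntegral.norm_integral_le_of_norm_le_const hb
    rw [Real.norm_eq_abs] at this
    calc |∫ s in (0:ℝ)..t, (F (ψ s) - F (ψP s))|
        ≤ LF * (Real.exp (L * t) * M t) * |t - 0| := this
      _ = LF * t * Real.exp (L * t) * M t := by
          rw [sub_zero, abs_of_nonneg ht.1]; ring
end

section
/- Let H be a real Hilbert space, let f_1, …, f_n be an orthonormal family in H, and let P be the orthogonal projection of H onto the span of {f_1, …, f_n}. Let m be a Borel measure on H with m({0}) = 0 such that ∫_H ‖ξ‖² dm(ξ) < ∞ and ∫_H |⟨χ(ξ), f_k⟩| dm(ξ) < ∞ for every k = 1, …, n. Then ∫_{{ξ : 0 < ‖P(ξ)‖ ≤ 1}} ‖P(ξ)‖ dm(ξ) < ∞ and ∫_{{ξ : ‖P(ξ)‖ > 1}} ‖P(ξ)‖² dm(ξ) < ∞; equivalently, ∫_{{ξ : P(ξ) ≠ 0}} max(‖P(ξ)‖, ‖P(ξ)‖²) dm(ξ) < ∞. 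-/
open MeasureTheory
open scoped RealInnerProductSpace

/-!
On the span of the orthonormal family, `P ξ = ∑ ⟪f k, ξ⟫ f k`, so `‖P ξ‖ ≤ ∑ |⟪ξ, f k⟫|`, which is
the truncated directional moment when `‖ξ‖ ≤ 1`; when `‖ξ‖ > 1` instead `‖P ξ‖ ≤ ‖ξ‖ ≤ ‖ξ‖²`.
Hence `‖P ξ‖` and `‖P ξ‖²` are dominated by integrable functions on all of `H`, and so is their
maximum.
-/

section
open Submodule Set
open scoped InnerProductSpace

variable {𝕜 E ι : Type*} [RCLike 𝕜] [NormedAddCommGroup E] [InnerProductSpace 𝕜 E] [Fintype ι]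
  {f : ι → E}

theorem Orthonormal.starProjection_span_range_apply (hf : Orthonormal 𝕜 f)
    [(span 𝕜 (range f)).HasOrthogonalProjection] (x : E) :
    (span 𝕜 (range f)).starProjection x = ∑ i, ⟪f i, x⟫_𝕜 • f i := by
  let b₀ := Module.Basis.span hf.linearIndependent
  have hb₀ : ⇑b₀ = fun i => ⟨f i, subset_span (mem_range_self i)⟩ :=
    funext (Module.Basis.span_apply hf.linearIndependent)
  let b := OrthonormalBasis.mk (hb₀ ▸ orthonormal_span hf) b₀.span_eq.ge
  simp [starProjection_apply, b.orthogonalProjectionOnto_apply_eq_sum, b, b₀]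

theorem Orthonormal.norm_starProjection_span_range_le (hf : Orthonormal 𝕜 f)
    [(span 𝕜 (range f)).HasOrthogonalProjection] (x : E) :
    ‖(span 𝕜 (range f)).starProjection x‖ ≤ ∑ i, ‖⟪x, f i⟫_𝕜‖ := by
  rw [hf.starProjection_span_range_apply]
  refine (norm_sum_le _ _).trans_eq (Finset.sum_congr rfl fun i _ => ?_)
  rw [norm_smul, hf.norm_eq_one, mul_one, norm_inner_symm]

end

section
open Submodule Set

theorem Orthonormal.norm_starProjection_span_range_le_truncated_add_sq {F ι : Type*}
    [NormedAddCommGroup F] [InnerProductSpace ℝ F] [Fintype ι] {f : ι → F} (hf : Orthonormal ℝ f)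
    [(span ℝ (range f)).HasOrthogonalProjection] (x : F) :
    ‖(span ℝ (range f)).starProjection x‖ ≤
      ∑ i, |⟪(if ‖x‖ ≤ 1 then x else 0), f i⟫| + ‖x‖ ^ 2 := by
  split_ifs with hx
  · calc _ ≤ ∑ i, |⟪x, f i⟫| := by
          simpa only [Real.norm_eq_abs] using hf.norm_starProjection_span_range_le x
      _ ≤ _ := le_add_of_nonneg_right (by positivity)
  · have hx1 : 1 < ‖x‖ := not_le.mp hx
    simp only [inner_zero_left, abs_zero, Finset.sum_const_zero, zero_add]
    calc _ ≤ ‖x‖ := norm_starProjection_apply_le _ x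
      _ ≤ ‖x‖ ^ 2 := by nlinarith

end

theorem stmt_11_general {H : Type*} [NormedAddCommGroup H] [InnerProductSpace ℝ H]
    [MeasurableSpace H] [BorelSpace H]
    (n : ℕ) (f : Fin n → H) (hf : Orthonormal ℝ f)
    (P : H →L[ℝ] H)
    (hP : ∀ x : H, P x =
      (haveI : FiniteDimensional ℝ (Submodule.span ℝ (Set.range f)) :=
        FiniteDimensional.span_of_finite ℝ (Set.finite_range f)
       (Submodule.orthogonalProjection (Submodule.span ℝ (Set.range f)) x : H)))
    (m : Measure H)
    (hm2 : Integrable (fun ξ : H => ‖ξ‖ ^ 2) m)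
    (hm1 : ∀ k : Fin n,
      Integrable (fun ξ : H => |⟪(if ‖ξ‖ ≤ 1 then ξ else 0), f k⟫|) m) :
    IntegrableOn (fun ξ : H => ‖P ξ‖) {ξ : H | 0 < ‖P ξ‖ ∧ ‖P ξ‖ ≤ 1} m ∧
    IntegrableOn (fun ξ : H => ‖P ξ‖ ^ 2) {ξ : H | 1 < ‖P ξ‖} m ∧
    IntegrableOn (fun ξ : H => max ‖P ξ‖ (‖P ξ‖ ^ 2)) {ξ : H | P ξ ≠ 0} m := by
  have : FiniteDimensional ℝ (Submodule.span ℝ (Set.range f)) :=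
    FiniteDimensional.span_of_finite ℝ (Set.finite_range f)
  have hPK : P = (Submodule.span ℝ (Set.range f)).starProjection := ContinuousLinearMap.ext hP
  have hmeas : AEStronglyMeasurable (fun ξ => ‖P ξ‖) m := P.continuous.norm.aestronglyMeasurable
  have h1 : Integrable (fun ξ => ‖P ξ‖) m :=
    ((integrable_finsetSum _ fun k _ => hm1 k).add hm2).mono' hmeas <| ae_of_all _ fun ξ => by
      simpa [hPK] using hf.norm_starProjection_span_range_le_truncated_add_sq ξ
  have h2 : Integrable (fun ξ => ‖P ξ‖ ^ 2) m :=
    hm2.mono' (hmeas.pow 2) <| ae_of_all _ fun ξ => by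
      simpa [hPK] using
        pow_le_pow_left₀ (norm_nonneg _) (Submodule.norm_starProjection_apply_le _ ξ) 2
  exact ⟨h1.integrableOn, h2.integrableOn, (h1.sup h2).integrableOn⟩

/-- Integrability of the projected jump measure: if `P` is the orthogonal projection onto the
span of an orthonormal family `f_1, …, f_n` and `m` is a measure with `m({0}) = 0`, finite
second moment and finite directional first moments `∫ |⟪χ(ξ), f_k⟫| dm < ∞` (with
`χ(ξ) = ξ · 1_{‖ξ‖ ≤ 1}(ξ)` the truncation function), then
`∫_{0<‖Pξ‖≤1} ‖Pξ‖ dm < ∞`, `∫_{‖Pξ‖>1} ‖Pξ‖² dm < ∞`, and equivalently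
`∫_{Pξ≠0} max(‖Pξ‖, ‖Pξ‖²) dm < ∞`. -/
theorem stmt_11 {H : Type*} [NormedAddCommGroup H] [InnerProductSpace ℝ H] [CompleteSpace H]
    [MeasurableSpace H] [BorelSpace H]
    (n : ℕ) (f : Fin n → H) (hf : Orthonormal ℝ f)
    (P : H →L[ℝ] H)
    (hP : ∀ x : H, P x =
      (haveI : FiniteDimensional ℝ (Submodule.span ℝ (Set.range f)) :=
        FiniteDimensional.span_of_finite ℝ (Set.finite_range f)
       (Submodule.orthogonalProjection (Submodule.span ℝ (Set.range f)) x : H)))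
    (m : Measure H) (hm0 : m {0} = 0)
    (hm2 : Integrable (fun ξ : H => ‖ξ‖ ^ 2) m)
    (hm1 : ∀ k : Fin n,
      Integrable (fun ξ : H => |⟪(if ‖ξ‖ ≤ 1 then ξ else 0), f k⟫|) m) :
    IntegrableOn (fun ξ : H => ‖P ξ‖) {ξ : H | 0 < ‖P ξ‖ ∧ ‖P ξ‖ ≤ 1} m ∧
    IntegrableOn (fun ξ : H => ‖P ξ‖ ^ 2) {ξ : H | 1 < ‖P ξ‖} m ∧
    IntegrableOn (fun ξ : H => max ‖P ξ‖ (‖P ξ‖ ^ 2)) {ξ : H | P ξ ≠ 0} m :=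
  stmt_11_general n f hf P hP m hm2 hm1
end

section
/- Let H be a real Hilbert space, let f_1, …, f_n be an orthonormal family in H, and let P be the orthogonal projection of H onto the span of {f_1, …, f_n}. Let b ∈ H and let m be a Borel measure on H with m({0}) = 0 such that ∫_H ‖ξ‖² dm(ξ) < ∞ and ∫_H |⟨χ(ξ), f_k⟩| dm(ξ) < ∞ for every k = 1, …, n. Let u be in the span of {f_1, …, f_n} (so P(u) = u) and assume ⟨ξ, u⟩ ≥ 0 for m-almost every ξ. Define b_P := P(b) + ∫_{{ξ : ‖P(ξ)‖ ≤ 1 < ‖ξ‖}} P(ξ) dm(ξ) (a Bochner integral in H, which exists). Then ⟨b, u⟩ − ∫_H (e^{−⟨ξ,u⟩} − 1 + ⟨χ(ξ), u⟩) dm(ξ) = ⟨b_P, u⟩ − ∫_H (e^{−⟨P(ξ),u⟩} − 1 + ⟨χ(P(ξ)), u⟩) dm(ξ), with all integrals absolutely convergent. -/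
open MeasureTheory
open scoped RealInnerProductSpace

/-!
Since `P` is self-adjoint and fixes `u`, `⟪P ξ, u⟫ = ⟪ξ, u⟫`, so the two integrands differ only
through the truncation term. As `P` is a contraction, `‖ξ‖ ≤ 1` forces `‖P ξ‖ ≤ 1`, and the
difference is `⟪P ξ, u⟫` on `{‖P ξ‖ ≤ 1 < ‖ξ‖}` and `0` elsewhere. On the half-space
`⟪ξ, u⟫ ≥ 0` both integrands are `O(‖ξ‖²)` (by `0 ≤ e^{-t} - 1 + t ≤ t²/2` for small jumps and
`|e^{-t} - 1| ≤ 1` for large ones), so everything is `m`-integrable and integrating the pointwise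
identity gives the result.
-/

theorem Real.abs_exp_neg_sub_one_add_le {t : ℝ} (ht : 0 ≤ t) :
    |Real.exp (-t) - 1 + t| ≤ t ^ 2 / 2 := by
  have h_lower : 1 - t ≤ Real.exp (-t) := by linarith [Real.add_one_le_exp (-t)]
  -- `e^{-t} ≤ 1 / (1 + t + t²/2) ≤ 1 - t + t²/2`, as `(1 - t + t²/2)(1 + t + t²/2) = 1 + t⁴/4`
  have h_upper : Real.exp (-t) ≤ 1 - t + t ^ 2 / 2 := by
    have hq := Real.quadratic_le_exp_of_nonneg ht
    have hprod : Real.exp (-t) * Real.exp t = 1 := by rw [← Real.exp_add]; simp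
    nlinarith [Real.exp_pos (-t), sq_nonneg (t ^ 2)]
  rw [abs_le]
  constructor <;> nlinarith

section Truncation

variable {H : Type*} [NormedAddCommGroup H]

noncomputable def truncate (ξ : H) : H := if ‖ξ‖ ≤ 1 then ξ else 0

def truncationGap (T : H → H) : Set H := {ξ | ‖T ξ‖ ≤ 1 ∧ 1 < ‖ξ‖}

variable [MeasurableSpace H] [BorelSpace H] {m : Measure H}

@[fun_prop]
theorem measurable_truncate : Measurable (truncate : H → H) :=
  Measurable.ite (measurableSet_le measurable_norm measurable_const) measurable_id measurable_const

theorem measurableSet_truncationGap {T : H → H} (hT : Measurable T) :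
    MeasurableSet (truncationGap T) :=
  (measurableSet_le hT.norm measurable_const).inter
    (measurableSet_lt measurable_const measurable_norm)

theorem integrableOn_truncationGap {T : H → H} (hT : StronglyMeasurable T)
    (hm2 : Integrable (fun ξ => ‖ξ‖ ^ 2) m) : IntegrableOn T (truncationGap T) m := by
  refine hm2.integrableOn.mono' hT.aestronglyMeasurable.restrict
    (ae_restrict_of_forall_mem (measurableSet_truncationGap hT.measurable) ?_)
  rintro ξ ⟨hTξ, hξ⟩
  calc ‖T ξ‖ ≤ 1 := hTξ
    _ ≤ ‖ξ‖ ^ 2 := one_le_pow₀ hξ.le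

end Truncation

section LaplaceIntegrand

variable {H : Type*} [NormedAddCommGroup H] [InnerProductSpace ℝ H]

noncomputable def laplaceIntegrand (u ξ : H) : ℝ := Real.exp (-⟪ξ, u⟫) - 1 + ⟪truncate ξ, u⟫

theorem abs_laplaceIntegrand_le {u x : H} (hx : 0 ≤ ⟪x, u⟫) :
    |laplaceIntegrand u x| ≤ (1 + ‖u‖ ^ 2 / 2) * ‖x‖ ^ 2 := by
  unfold laplaceIntegrand truncate
  split_ifs with h
  · calc |Real.exp (-⟪x, u⟫) - 1 + ⟪x, u⟫| ≤ ⟪x, u⟫ ^ 2 / 2 := Real.abs_exp_neg_sub_one_add_le hx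
      _ ≤ (‖x‖ * ‖u‖) ^ 2 / 2 := by gcongr; exact real_inner_le_norm x u
      _ ≤ (1 + ‖u‖ ^ 2 / 2) * ‖x‖ ^ 2 := by nlinarith [sq_nonneg ‖x‖]
  · have hx1 : 1 ≤ ‖x‖ ^ 2 := one_le_pow₀ (not_le.mp h).le
    have he : Real.exp (-⟪x, u⟫) ≤ 1 := Real.exp_le_one_iff.mpr (neg_nonpos.mpr hx)
    rw [inner_zero_left, add_zero, abs_le]
    constructor <;> nlinarith [Real.exp_pos (-⟪x, u⟫), sq_nonneg ‖u‖]

theorem laplaceIntegrand_sub_laplaceIntegrand {u x y : H} (hyx : ‖y‖ ≤ ‖x‖)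
    (h_inner : ⟪y, u⟫ = ⟪x, u⟫) :
    laplaceIntegrand u y - laplaceIntegrand u x = if ‖y‖ ≤ 1 ∧ 1 < ‖x‖ then ⟪y, u⟫ else 0 := by
  unfold laplaceIntegrand truncate
  rw [h_inner]
  split_ifs <;> simp_all <;> linarith

variable [MeasurableSpace H] [BorelSpace H] {m : Measure H} {u : H}

theorem measurable_laplaceIntegrand (u : H) : Measurable (laplaceIntegrand u) := by
  unfold laplaceIntegrand
  fun_prop

theorem integrable_laplaceIntegrand_comp {T : H → H} (hT : Measurable T)
    (hT_le : ∀ x, ‖T x‖ ≤ ‖x‖) (hm2 : Integrable (fun ξ => ‖ξ‖ ^ 2) m)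
    (hpos : ∀ᵐ ξ ∂m, 0 ≤ ⟪T ξ, u⟫) :
    Integrable (fun ξ => laplaceIntegrand u (T ξ)) m := by
  refine (hm2.const_mul (1 + ‖u‖ ^ 2 / 2)).mono'
    ((measurable_laplaceIntegrand u).comp hT).aestronglyMeasurable ?_
  filter_upwards [hpos] with ξ hξ
  calc ‖laplaceIntegrand u (T ξ)‖ ≤ (1 + ‖u‖ ^ 2 / 2) * ‖T ξ‖ ^ 2 := abs_laplaceIntegrand_le hξ
    _ ≤ (1 + ‖u‖ ^ 2 / 2) * ‖ξ‖ ^ 2 := by gcongr; exact hT_le ξ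

theorem integrable_laplaceIntegrand (hm2 : Integrable (fun ξ => ‖ξ‖ ^ 2) m)
    (hpos : ∀ᵐ ξ ∂m, 0 ≤ ⟪ξ, u⟫) : Integrable (laplaceIntegrand u) m :=
  integrable_laplaceIntegrand_comp measurable_id' (fun _ => le_rfl) hm2 hpos

theorem integral_laplaceIntegrand_comp_sub {T : H → H} (hT : Measurable T)
    (hT_le : ∀ x, ‖T x‖ ≤ ‖x‖) (hT_inner : ∀ x, ⟪T x, u⟫ = ⟪x, u⟫)
    (hm2 : Integrable (fun ξ => ‖ξ‖ ^ 2) m) (hpos : ∀ᵐ ξ ∂m, 0 ≤ ⟪ξ, u⟫) :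
    ∫ ξ, laplaceIntegrand u (T ξ) ∂m - ∫ ξ, laplaceIntegrand u ξ ∂m =
      ∫ ξ in truncationGap T, ⟪T ξ, u⟫ ∂m := by
  have hposT : ∀ᵐ ξ ∂m, 0 ≤ ⟪T ξ, u⟫ := by simpa only [hT_inner] using hpos
  rw [← integral_sub (integrable_laplaceIntegrand_comp hT hT_le hm2 hposT)
    (integrable_laplaceIntegrand hm2 hpos), ← integral_indicator (measurableSet_truncationGap hT)]
  congr 1 with ξ
  rw [laplaceIntegrand_sub_laplaceIntegrand (hT_le ξ) (hT_inner ξ)]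
  by_cases h : ξ ∈ truncationGap T
  · exact (if_pos h).trans (Set.indicator_of_mem h (fun ξ => ⟪T ξ, u⟫)).symm
  · exact (if_neg h).trans (Set.indicator_of_notMem h (fun ξ => ⟪T ξ, u⟫)).symm

theorem inner_sub_integral_laplaceIntegrand_eq [CompleteSpace H] {T : H → H}
    (hT : StronglyMeasurable T) (hT_le : ∀ x, ‖T x‖ ≤ ‖x‖) (hT_inner : ∀ x, ⟪T x, u⟫ = ⟪x, u⟫)
    (hm2 : Integrable (fun ξ => ‖ξ‖ ^ 2) m) (hpos : ∀ᵐ ξ ∂m, 0 ≤ ⟪ξ, u⟫) (b : H) :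
    ⟪b, u⟫ - ∫ ξ, laplaceIntegrand u ξ ∂m =
      ⟪T b + ∫ ξ in truncationGap T, T ξ ∂m, u⟫ - ∫ ξ, laplaceIntegrand u (T ξ) ∂m := by
  have h_inner_integral :
      ⟪∫ ξ in truncationGap T, T ξ ∂m, u⟫ = ∫ ξ in truncationGap T, ⟪T ξ, u⟫ ∂m := by
    rw [real_inner_comm, ← integral_inner (integrableOn_truncationGap hT hm2) u]
    congr with ξ
    exact real_inner_comm _ _
  rw [inner_add_left, hT_inner, h_inner_integral,
    ← integral_laplaceIntegrand_comp_sub hT.measurable hT_le hT_inner hm2 hpos]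
  ring

end LaplaceIntegrand

theorem Submodule.stronglyMeasurable_starProjection {H : Type*} [NormedAddCommGroup H]
    [InnerProductSpace ℝ H] [MeasurableSpace H] [BorelSpace H]
    (K : Submodule ℝ H) [FiniteDimensional ℝ K] : StronglyMeasurable K.starProjection := by
  refine stronglyMeasurable_iff_measurable_separable.mpr
    ⟨K.starProjection.continuous.measurable, ?_⟩
  refine (TopologicalSpace.isSeparable_range (continuous_subtype_val (p := (· ∈ K)))).mono ?_
  rintro - ⟨x, rfl⟩
  exact ⟨K.orthogonalProjectionOnto x, (K.starProjection_apply x).symm⟩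

theorem stmt_12_general {H : Type*} [NormedAddCommGroup H] [InnerProductSpace ℝ H] [CompleteSpace H]
    [MeasurableSpace H] [BorelSpace H]
    (n : ℕ) (f : Fin n → H)
    (P : H →L[ℝ] H)
    (hP : ∀ x : H, P x =
      (haveI : FiniteDimensional ℝ (Submodule.span ℝ (Set.range f)) :=
        FiniteDimensional.span_of_finite ℝ (Set.finite_range f)
       (Submodule.orthogonalProjectionOnto (Submodule.span ℝ (Set.range f)) x : H)))
    (b : H)
    (m : Measure H)
    (hm2 : Integrable (fun ξ : H => ‖ξ‖ ^ 2) m)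
    (u : H) (hu : u ∈ Submodule.span ℝ (Set.range f))
    (hpos : ∀ᵐ ξ ∂m, 0 ≤ ⟪ξ, u⟫) :
    IntegrableOn (fun ξ : H => P ξ) {ξ : H | ‖P ξ‖ ≤ 1 ∧ 1 < ‖ξ‖} m ∧
    Integrable (fun ξ : H =>
      Real.exp (-⟪ξ, u⟫) - 1 + ⟪(if ‖ξ‖ ≤ 1 then ξ else 0), u⟫) m ∧
    Integrable (fun ξ : H =>
      Real.exp (-⟪P ξ, u⟫) - 1 + ⟪(if ‖P ξ‖ ≤ 1 then P ξ else 0), u⟫) m ∧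
    ⟪b, u⟫ - ∫ ξ, (Real.exp (-⟪ξ, u⟫) - 1 + ⟪(if ‖ξ‖ ≤ 1 then ξ else 0), u⟫) ∂m
      = ⟪P b + ∫ ξ in {ξ : H | ‖P ξ‖ ≤ 1 ∧ 1 < ‖ξ‖}, P ξ ∂m, u⟫
        - ∫ ξ, (Real.exp (-⟪P ξ, u⟫) - 1 + ⟪(if ‖P ξ‖ ≤ 1 then P ξ else 0), u⟫) ∂m := by
  have : FiniteDimensional ℝ (Submodule.span ℝ (Set.range f)) :=
    FiniteDimensional.span_of_finite ℝ (Set.finite_range f)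
  set K := Submodule.span ℝ (Set.range f)
  obtain rfl : P = K.starProjection := ContinuousLinearMap.ext hP
  have hP_meas := K.stronglyMeasurable_starProjection
  have hP_le : ∀ x, ‖K.starProjection x‖ ≤ ‖x‖ := K.norm_starProjection_apply_le
  have hP_inner : ∀ x, ⟪K.starProjection x, u⟫ = ⟪x, u⟫ := fun x => by
    rw [K.inner_starProjection_left_eq_right, K.starProjection_eq_self_iff.mpr hu]
  exact ⟨integrableOn_truncationGap hP_meas hm2, integrable_laplaceIntegrand hm2 hpos,
    integrable_laplaceIntegrand_comp hP_meas.measurable hP_le hm2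
      (by simpa only [hP_inner] using hpos),
    inner_sub_integral_laplaceIntegrand_eq hP_meas hP_le hP_inner hm2 hpos b⟩

/-- Change-of-truncation identity for the projected parameters: with `P` the orthogonal
projection onto the span of an orthonormal family `f_1, …, f_n`, `χ(ξ) = ξ · 1_{‖ξ‖ ≤ 1}(ξ)`
the truncation function, `u` in the span with `⟪ξ, u⟫ ≥ 0` `m`-a.e., and
`b_P = P(b) + ∫_{‖Pξ‖ ≤ 1 < ‖ξ‖} P(ξ) dm`, one has
`⟪b,u⟫ − ∫ (e^{−⟪ξ,u⟫} − 1 + ⟪χ(ξ),u⟫) dm = ⟪b_P,u⟫ − ∫ (e^{−⟪Pξ,u⟫} − 1 + ⟪χ(Pξ),u⟫) dm`,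
with all integrals absolutely convergent. -/
theorem stmt_12 {H : Type*} [NormedAddCommGroup H] [InnerProductSpace ℝ H] [CompleteSpace H]
    [MeasurableSpace H] [BorelSpace H]
    (n : ℕ) (f : Fin n → H) (hf : Orthonormal ℝ f)
    (P : H →L[ℝ] H)
    (hP : ∀ x : H, P x =
      (haveI : FiniteDimensional ℝ (Submodule.span ℝ (Set.range f)) :=
        FiniteDimensional.span_of_finite ℝ (Set.finite_range f)
       (Submodule.orthogonalProjectionOnto (Submodule.span ℝ (Set.range f)) x : H)))
    (b : H)
    (m : Measure H) (hm0 : m {0} = 0)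
    (hm2 : Integrable (fun ξ : H => ‖ξ‖ ^ 2) m)
    (hm1 : ∀ k : Fin n,
      Integrable (fun ξ : H => |⟪(if ‖ξ‖ ≤ 1 then ξ else 0), f k⟫|) m)
    (u : H) (hu : u ∈ Submodule.span ℝ (Set.range f))
    (hpos : ∀ᵐ ξ ∂m, 0 ≤ ⟪ξ, u⟫) :
    IntegrableOn (fun ξ : H => P ξ) {ξ : H | ‖P ξ‖ ≤ 1 ∧ 1 < ‖ξ‖} m ∧
    Integrable (fun ξ : H =>
      Real.exp (-⟪ξ, u⟫) - 1 + ⟪(if ‖ξ‖ ≤ 1 then ξ else 0), u⟫) m ∧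
    Integrable (fun ξ : H =>
      Real.exp (-⟪P ξ, u⟫) - 1 + ⟪(if ‖P ξ‖ ≤ 1 then P ξ else 0), u⟫) m ∧
    ⟪b, u⟫ - ∫ ξ, (Real.exp (-⟪ξ, u⟫) - 1 + ⟪(if ‖ξ‖ ≤ 1 then ξ else 0), u⟫) ∂m
      = ⟪P b + ∫ ξ in {ξ : H | ‖P ξ‖ ≤ 1 ∧ 1 < ‖ξ‖}, P ξ ∂m, u⟫
        - ∫ ξ, (Real.exp (-⟪P ξ, u⟫) - 1 + ⟪(if ‖P ξ‖ ≤ 1 then P ξ else 0), u⟫) ∂m :=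
  stmt_12_general n f P hP b m hm2 u hu hpos
end

section
/- Let H be an infinite-dimensional real Hilbert space with a Hilbert (orthonormal) basis (f_n)_{n≥1}, let c > 0, and define the Borel measure ν := Σ_{n=1}^∞ c·δ_{f_n/n}, where δ_x denotes the Dirac measure at x. Then: (i) ∫_H ‖ξ‖² dν(ξ) = c·Σ_{n=1}^∞ 1/n² < ∞; (ii) for every u ∈ H, ∫_H |⟨ξ, u⟩| dν(ξ) = c·Σ_{n=1}^∞ |⟨f_n, u⟩|/n < ∞; and (iii) ∫_H ‖ξ‖ dν(ξ) = ∞. -/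
open MeasureTheory
open scoped RealInnerProductSpace ENNReal

/-!
The measure `ν` puts mass `c` at each point `fₙ/(n+1)`, which has norm `1/(n+1)`, so every
integral against `ν` is `c` times the series of the values of the integrand at these points.
The second moment is then the convergent series `Σ 1/(n+1)²`, the total first moment the
divergent harmonic series, while in a fixed direction `u` the terms `|⟪fₙ,u⟫|/(n+1)` are products
of two square-summable sequences (Bessel's inequality for the first).
-/

section SumDirac

variable {α ι : Type*} [MeasurableSpace α] (a : ι → α) (w : ℝ≥0∞)

theorem lintegral_sum_smul_dirac {g : α → ℝ≥0∞} (hg : Measurable g) :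
    ∫⁻ x, g x ∂(Measure.sum fun i => w • Measure.dirac (a i)) = w * ∑' i, g (a i) := by
  simp_rw [lintegral_sum_measure, lintegral_smul_measure, lintegral_dirac' _ hg, smul_eq_mul,
    ENNReal.tsum_mul_left]

variable {E : Type*} [NormedAddCommGroup E] {g : α → E}

theorem integrable_sum_smul_dirac (hw : w ≠ ∞) (hg : StronglyMeasurable g)
    (hs : Summable fun i => ‖g (a i)‖) :
    Integrable g (Measure.sum fun i => w • Measure.dirac (a i)) := by
  refine ⟨hg.aestronglyMeasurable, ?_⟩
  rw [HasFiniteIntegral, lintegral_sum_smul_dirac a w hg.enorm]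
  simp_rw [← ofReal_norm]
  exact ENNReal.mul_lt_top hw.lt_top hs.tsum_ofReal_lt_top

theorem integral_sum_smul_dirac [NormedSpace ℝ E] [CompleteSpace E] [Countable ι] (hw : w ≠ ∞)
    (hg : StronglyMeasurable g) (hs : Summable fun i => ‖g (a i)‖) :
    ∫ x, g x ∂(Measure.sum fun i => w • Measure.dirac (a i)) = w.toReal • ∑' i, g (a i) := by
  rw [integral_sum_measure (integrable_sum_smul_dirac a w hw hg hs)]
  simp_rw [integral_smul_measure, integral_dirac' _ _ hg]
  exact tsum_const_smul'' _

end SumDirac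

theorem ENNReal.tsum_ofReal_eq_top_of_not_summable {ι : Type*} {g : ι → ℝ} (hg : ∀ i, 0 ≤ g i)
    (h : ¬Summable g) : ∑' i, ENNReal.ofReal (g i) = ∞ := by
  by_contra hne
  exact h <| by simpa only [ENNReal.toReal_ofReal (hg _)] using ENNReal.summable_toReal hne

theorem summable_one_div_nat_add_one_sq : Summable fun n : ℕ => 1 / ((n : ℝ) + 1) ^ 2 := by
  exact_mod_cast (summable_nat_add_iff 1).2 (Real.summable_one_div_nat_pow.2 one_lt_two)

theorem not_summable_inv_nat_add_one : ¬Summable fun n : ℕ => ((n : ℝ) + 1)⁻¹ := by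
  exact_mod_cast mt (summable_nat_add_iff 1).1 Real.not_summable_natCast_inv

theorem summable_abs_mul_of_summable_sq {ι : Type*} {f g : ι → ℝ}
    (hf : Summable fun i => f i ^ 2) (hg : Summable fun i => g i ^ 2) :
    Summable fun i => |f i * g i| :=
  (hf.add hg).of_nonneg_of_le (fun _ => abs_nonneg _) fun i => by
    rw [abs_mul]
    nlinarith [sq_nonneg (|f i| - |g i|), sq_abs (f i), sq_abs (g i)]

theorem Orthonormal.summable_abs_inner_div_nat_add_one {E : Type*} [NormedAddCommGroup E]
    [InnerProductSpace ℝ E] {v : ℕ → E} (hv : Orthonormal ℝ v) (u : E) :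
    Summable fun n : ℕ => |⟪v n, u⟫| / ((n : ℝ) + 1) := by
  have hinner : Summable fun n => ⟪v n, u⟫ ^ 2 := by
    simpa only [Real.norm_eq_abs, sq_abs] using hv.inner_products_summable u
  have hinv : Summable fun n : ℕ => ((n : ℝ) + 1)⁻¹ ^ 2 := by
    simpa only [inv_pow, one_div] using summable_one_div_nat_add_one_sq
  refine (summable_abs_mul_of_summable_sq hinner hinv).congr fun n => ?_
  rw [abs_mul, abs_of_pos (a := ((n : ℝ) + 1)⁻¹) (by positivity), div_eq_mul_inv]

theorem stmt_13_general {H : Type*} [NormedAddCommGroup H] [InnerProductSpace ℝ H]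
    [MeasurableSpace H] [BorelSpace H]
    (f : HilbertBasis ℕ ℝ H) (c : ℝ) (hc : 0 < c)
    (ν : Measure H)
    (hν : ν = Measure.sum (fun n : ℕ =>
      ENNReal.ofReal c • Measure.dirac ((((n : ℝ) + 1)⁻¹) • f n))) :
    (Summable (fun n : ℕ => 1 / ((n : ℝ) + 1) ^ 2) ∧
      Integrable (fun ξ : H => ‖ξ‖ ^ 2) ν ∧
      ∫ ξ, ‖ξ‖ ^ 2 ∂ν = c * ∑' n : ℕ, 1 / ((n : ℝ) + 1) ^ 2) ∧
    (∀ u : H,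
      Summable (fun n : ℕ => |⟪f n, u⟫| / ((n : ℝ) + 1)) ∧
      Integrable (fun ξ : H => |⟪ξ, u⟫|) ν ∧
      ∫ ξ, |⟪ξ, u⟫| ∂ν = c * ∑' n : ℕ, |⟪f n, u⟫| / ((n : ℝ) + 1)) ∧
    (∫⁻ ξ, ENNReal.ofReal ‖ξ‖ ∂ν = ⊤) := by
  subst hν
  have hinv (n : ℕ) : 0 < ((n : ℝ) + 1)⁻¹ := inv_pos.2 n.cast_add_one_pos
  have hnorm (n : ℕ) : ‖((n : ℝ) + 1)⁻¹ • f n‖ = ((n : ℝ) + 1)⁻¹ := by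
    rw [norm_smul, f.orthonormal.1 n, mul_one, Real.norm_of_nonneg (hinv n).le]
  have hsq (n : ℕ) : ‖((n : ℝ) + 1)⁻¹ • f n‖ ^ 2 = 1 / ((n : ℝ) + 1) ^ 2 := by
    rw [hnorm, inv_pow, one_div]
  have habs (u : H) (n : ℕ) : |⟪((n : ℝ) + 1)⁻¹ • f n, u⟫| = |⟪f n, u⟫| / ((n : ℝ) + 1) := by
    rw [real_inner_smul_left, abs_mul, abs_of_pos (hinv n), inv_mul_eq_div]
  have hsq_meas : StronglyMeasurable fun ξ : H => ‖ξ‖ ^ 2 :=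
    (continuous_norm.pow 2).stronglyMeasurable
  have habs_meas (u : H) : StronglyMeasurable fun ξ : H => |⟪ξ, u⟫| :=
    (continuous_id.inner continuous_const).abs.stronglyMeasurable
  have hsq_summable : Summable fun n : ℕ => ‖‖((n : ℝ) + 1)⁻¹ • f n‖ ^ 2‖ := by
    simpa only [hsq, Real.norm_eq_abs] using summable_one_div_nat_add_one_sq.abs
  have habs_summable (u : H) : Summable fun n : ℕ => ‖|⟪((n : ℝ) + 1)⁻¹ • f n, u⟫|‖ := by
    simpa only [habs, Real.norm_eq_abs] using
      (f.orthonormal.summable_abs_inner_div_nat_add_one u).abs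
  refine ⟨⟨summable_one_div_nat_add_one_sq, ?_, ?_⟩, fun u => ⟨?_, ?_, ?_⟩, ?_⟩
  · exact integrable_sum_smul_dirac _ _ ENNReal.ofReal_ne_top hsq_meas hsq_summable
  · rw [integral_sum_smul_dirac _ _ ENNReal.ofReal_ne_top hsq_meas hsq_summable,
      ENNReal.toReal_ofReal hc.le, smul_eq_mul, tsum_congr hsq]
  · exact f.orthonormal.summable_abs_inner_div_nat_add_one u
  · exact integrable_sum_smul_dirac _ _ ENNReal.ofReal_ne_top (habs_meas u) (habs_summable u)
  · rw [integral_sum_smul_dirac _ _ ENNReal.ofReal_ne_top (habs_meas u) (habs_summable u),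
      ENNReal.toReal_ofReal hc.le, smul_eq_mul, tsum_congr (habs u)]
  · rw [lintegral_sum_smul_dirac _ _ (by fun_prop), tsum_congr fun n => congrArg _ (hnorm n),
      ENNReal.tsum_ofReal_eq_top_of_not_summable (fun n => (hinv n).le)
        not_summable_inv_nat_add_one]
    exact ENNReal.mul_top (ENNReal.ofReal_pos.2 hc).ne'

/-- The jump measure `ν = Σₙ c·δ_{fₙ/n}` built from a Hilbert basis `(fₙ)` of an
infinite-dimensional real Hilbert space (indices shifted so that `n ≥ 1` becomes `n + 1`)
has finite second moment `∫‖ξ‖² dν = c·Σ 1/n² < ∞`, finite first moment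
`∫|⟪ξ,u⟫| dν = c·Σ |⟪fₙ,u⟫|/n < ∞` in every fixed direction `u`, yet infinite total first
moment `∫‖ξ‖ dν = ∞`. -/
theorem stmt_13 {H : Type*} [NormedAddCommGroup H] [InnerProductSpace ℝ H] [CompleteSpace H]
    [MeasurableSpace H] [BorelSpace H]
    (f : HilbertBasis ℕ ℝ H) (c : ℝ) (hc : 0 < c)
    (ν : Measure H)
    (hν : ν = Measure.sum (fun n : ℕ =>
      ENNReal.ofReal c • Measure.dirac ((((n : ℝ) + 1)⁻¹) • f n))) :
    (Summable (fun n : ℕ => 1 / ((n : ℝ) + 1) ^ 2) ∧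
      Integrable (fun ξ : H => ‖ξ‖ ^ 2) ν ∧
      ∫ ξ, ‖ξ‖ ^ 2 ∂ν = c * ∑' n : ℕ, 1 / ((n : ℝ) + 1) ^ 2) ∧
    (∀ u : H,
      Summable (fun n : ℕ => |⟪f n, u⟫| / ((n : ℝ) + 1)) ∧
      Integrable (fun ξ : H => |⟪ξ, u⟫|) ν ∧
      ∫ ξ, |⟪ξ, u⟫| ∂ν = c * ∑' n : ℕ, |⟪f n, u⟫| / ((n : ℝ) + 1)) ∧
    (∫⁻ ξ, ENNReal.ofReal ‖ξ‖ ∂ν = ⊤) :=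
  stmt_13_general f c hc ν hν
end
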